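/- (Lemma E_σ.) Let M be an extended CGM of form (2), let Γ ⊆ Ag, let σ ∈ {<, ⋪}, and let φ₁, φ₂ be PLTL formulas. Then the following state formula is valid in M: φ₁ σ_Γ φ₂ ⇔ ⋁_{Θ₁,Θ₂ ⊆ Θ_{I,Γ}} [ ⋀_{k=1,2} ( ⋀_{θ∈Θ_k} ∃◯([θ] ∧ φ_k) ∧ ⋀_{θ∈Θ_{I,Γ}∖Θ_k} ∀¬◯([θ] ∧ φ_k) ) ∧ ⋀_{θ₁∈Θ₁, θ₂∈Θ₂} [θ₁] σ_Γ [θ₂] ]. -/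
import Mathlib


/-- A concurrent game model over states `W`, players `Ag`, atomic propositions `AP`
and actions `Act i` for each player `i`.  Global decisions are elements of
`∀ i, Act i` (i.e. `Act_Ag`). -/
structure CGM (W Ag AP : Type) (Act : Ag → Type) where
  wI : W
  o : W → (∀ i, Act i) → W
  V : W → AP → Prop

namespace CGM

variable {W Ag AP : Type} {Act : Ag → Type}

/-- `v ∈ R^∞_M(w_I)`: an infinite play of `M` starting at the initial state. -/
def InfPlay (M : CGM W Ag AP Act) (v : ℕ → W) : Prop :=
  v 0 = M.wI ∧ ∀ k : ℕ, ∃ a : ∀ i, Act i, v (k + 1) = M.o (v k) a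

/-- `w ∈ R^∞_M(v⁰…v^k)`: the infinite continuations of the finite play `v⁰…v^k`
(a finite play is represented by an infinite sequence `v` together with the index `k`
of its last position). -/
def Ext (M : CGM W Ag AP Act) (v : ℕ → W) (k : ℕ) (w : ℕ → W) : Prop :=
  (∀ j ≤ k, w j = v j) ∧ ∀ j : ℕ, ∃ a : ∀ i, Act i, w (j + 1) = M.o (w j) a

end CGM

/-- PLTL (linear-time temporal logic with past) formulas:
`⊥ | p | φ⇒φ | ◯φ | φUφ | Yφ | φSφ`. -/
inductive PLTL (AP : Type) : Type where
  | fls : PLTL AP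
  | atom (p : AP) : PLTL AP
  | imp (φ ψ : PLTL AP) : PLTL AP
  | next (φ : PLTL AP) : PLTL AP
  | untl (φ ψ : PLTL AP) : PLTL AP
  | yest (φ : PLTL AP) : PLTL AP
  | snce (φ ψ : PLTL AP) : PLTL AP
  deriving DecidableEq

namespace PLTL

variable {W AP : Type}

/-- Satisfaction of a PLTL formula at position `k` of the infinite play `v`,
relative to the valuation `V`. -/
def Sat (V : W → AP → Prop) : PLTL AP → (ℕ → W) → ℕ → Prop
  | fls, _, _ => False
  | atom p, v, k => V (v k) p
  | imp φ ψ, v, k => Sat V φ v k → Sat V ψ v k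
  | next φ, v, k => Sat V φ v (k + 1)
  | untl φ ψ, v, k => ∃ n : ℕ, Sat V ψ v (k + n) ∧ ∀ m < n, Sat V φ v (k + m)
  | yest φ, v, k => k ≠ 0 ∧ Sat V φ v (k - 1)
  | snce φ ψ, v, k => ∃ n ≤ k, Sat V ψ v (k - n) ∧ ∀ m < n, Sat V φ v (k - m)

/-- `¬φ := φ ⇒ ⊥`. -/
def neg (φ : PLTL AP) : PLTL AP := φ.imp fls
/-- `⊤ := ¬⊥`. -/
def top : PLTL AP := neg fls
/-- `φ ∧ ψ`. -/
def and (φ ψ : PLTL AP) : PLTL AP := neg (φ.imp ψ.neg)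
/-- `φ ∨ ψ`. -/
def or (φ ψ : PLTL AP) : PLTL AP := φ.neg.imp ψ
/-- `◇φ := ⊤ U φ`. -/
def ev (φ : PLTL AP) : PLTL AP := top.untl φ
/-- `□φ := ¬◇¬φ`. -/
def alw (φ : PLTL AP) : PLTL AP := neg (ev (neg φ))
/-- `◇⁻φ := ⊤ S φ` (sometime in the past). -/
def evPast (φ : PLTL AP) : PLTL AP := top.snce φ
/-- `□⁻φ := ¬◇⁻¬φ` (always in the past). -/
def alwPast (φ : PLTL AP) : PLTL AP := neg (evPast (neg φ))
/-- `I := ¬Y⊤` (the beginning of time). -/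
def start : PLTL AP := neg (yest top)
/-- `[φ] := □⁻(I ⇒ φ)`. -/
def bracket (φ : PLTL AP) : PLTL AP := alwPast (start.imp φ)

end PLTL

section Pref

variable {W Ag AP : Type} {Act : Ag → Type}

/-- Satisfaction of the binary preference construct at the finite play `v⁰…v^k`:
all pairs of infinite continuations satisfying the respective operands at position
`k + 1 = |v⁰…v^k|` are related by `R`. -/
def PrefSat (M : CGM W Ag AP Act) (R : (ℕ → W) → (ℕ → W) → Prop)
    (φ₁ φ₂ : PLTL AP) (v : ℕ → W) (k : ℕ) : Prop :=
  ∀ w₁ w₂ : ℕ → W, M.Ext v k w₁ → M.Ext v k w₂ →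
    PLTL.Sat M.V φ₁ w₁ (k + 1) → PLTL.Sat M.V φ₂ w₂ (k + 1) → R w₁ w₂

/-- `σ = true` encodes the operator `<`, `σ = false` encodes `⋪`:
`SigRel σ R` is `R` itself resp. the complement of `R`. -/
def SigRel {α : Type} (σ : Bool) (R : α → α → Prop) : α → α → Prop :=
  fun a b => if σ then R a b else ¬ R a b

/-- `M,(v⁰…v^k) ⊨ φ σ_Γ ψ`, i.e. `⋀_{i∈Γ} φ σ_i ψ`. -/
def PrefG (M : CGM W Ag AP Act) (pref : Ag → (ℕ → W) → (ℕ → W) → Prop)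
    (σ : Bool) (Γ : Set Ag) (φ ψ : PLTL AP) (v : ℕ → W) (k : ℕ) : Prop :=
  ∀ i ∈ Γ, PrefSat M (SigRel σ (pref i)) φ ψ v k

/-- An extended CGM of form (1): each `pref i` is a strict partial order
(irreflexive and transitive) on the set `R^∞_M(w_I)` of infinite plays. -/
def Form1 (M : CGM W Ag AP Act) (pref : Ag → (ℕ → W) → (ℕ → W) → Prop) : Prop :=
  ∀ i : Ag,
    (∀ v : ℕ → W, M.InfPlay v → ¬ pref i v v) ∧
    (∀ u v w : ℕ → W, M.InfPlay u → M.InfPlay v → M.InfPlay w →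
      pref i u v → pref i v w → pref i u w)

end Pref

section Form2

variable {W Ag AP : Type} {Act : Ag → Type}

/-- The conjunction `⋀_{i∈Γ} f i` of the designated objectives of the members of `Γ`. -/
noncomputable def finsetAndP (Γ : Finset Ag) (f : Ag → PLTL AP) : PLTL AP :=
  (Γ.toList.map f).foldr PLTL.and PLTL.top

/-- `Θ_{I,Γ} := { ⋀_{i∈Γ} θ_i : θ_i ∈ Θ_{I,i} for each i ∈ Γ }`. -/
noncomputable def ThetaG (Θ : Ag → Finset (PLTL AP)) (Γ : Finset Ag) :
    Set (PLTL AP) :=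
  { θ | ∃ f : Ag → PLTL AP, (∀ i ∈ Γ, f i ∈ Θ i) ∧ θ = finsetAndP Γ f }

/-- An extended CGM of form (2): an extended CGM of form (1) together with, for each
player `i`, a finite set `Θ i` of PLTL formulas and a relation `prec i` on it, such
that the classes `⟦θ⟧ = {w ∈ R^∞_M(w_I) : M,w,0 ⊨ θ}` of distinct `θ ∈ Θ i` are
disjoint, the classes cover `R^∞_M(w_I)`, and on the classes the preference `pref i`
is induced by `prec i`. -/
def Form2 (M : CGM W Ag AP Act) (pref : Ag → (ℕ → W) → (ℕ → W) → Prop)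
    (Θ : Ag → Finset (PLTL AP)) (prec : Ag → PLTL AP → PLTL AP → Prop) : Prop :=
  Form1 M pref ∧
  -- the classes cover `R^∞_M(w_I)`
  (∀ i : Ag, ∀ v : ℕ → W, M.InfPlay v → ∃ θ ∈ Θ i, PLTL.Sat M.V θ v 0) ∧
  -- distinct objectives define disjoint classes
  (∀ i : Ag, ∀ θ ∈ Θ i, ∀ θ' ∈ Θ i, ∀ v : ℕ → W, M.InfPlay v →
    PLTL.Sat M.V θ v 0 → PLTL.Sat M.V θ' v 0 → θ = θ') ∧
  -- on the classes, `pref i` is induced by `prec i`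
  (∀ i : Ag, ∀ θ ∈ Θ i, ∀ θ' ∈ Θ i, ∀ v v' : ℕ → W, M.InfPlay v → M.InfPlay v' →
    PLTL.Sat M.V θ v 0 → PLTL.Sat M.V θ' v' 0 → (pref i v v' ↔ prec i θ θ'))

/-- `M,(v⁰…v^k) ⊨ φ σ_Γ ψ` for a coalition `Γ` given as a finite set. -/
def PrefGF (M : CGM W Ag AP Act) (pref : Ag → (ℕ → W) → (ℕ → W) → Prop)
    (σ : Bool) (Γ : Finset Ag) (φ ψ : PLTL AP) (v : ℕ → W) (k : ℕ) : Prop :=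
  ∀ i ∈ Γ, PrefSat M (SigRel σ (pref i)) φ ψ v k

end Form2

section Aux

variable {W Ag AP : Type} {Act : Ag → Type}

lemma sat_top (V : W → AP → Prop) (v : ℕ → W) (k : ℕ) :
    PLTL.Sat V PLTL.top v k := fun h => h

lemma sat_and (V : W → AP → Prop) (φ ψ : PLTL AP) (v : ℕ → W) (k : ℕ) :
    PLTL.Sat V (φ.and ψ) v k ↔ PLTL.Sat V φ v k ∧ PLTL.Sat V ψ v k := by
  simp only [PLTL.and, PLTL.neg, PLTL.Sat]
  tauto

lemma sat_bracket (V : W → AP → Prop) (φ : PLTL AP) (v : ℕ → W) (k : ℕ) :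
    PLTL.Sat V (PLTL.bracket φ) v k ↔ PLTL.Sat V φ v 0 := by
  simp only [PLTL.bracket, PLTL.alwPast, PLTL.evPast, PLTL.start, PLTL.top,
    PLTL.neg, PLTL.Sat]
  constructor
  · intro h
    by_contra hφ
    exact h ⟨k, le_refl k, fun himp =>
      hφ (by simpa using himp (fun hne => hne.1 (by omega))),
      fun m _ h' => h'⟩
  · rintro hφ ⟨n, hn, hc, -⟩
    apply hc
    intro hstart
    have hz : k - n = 0 := by
      by_contra hne
      exact hstart ⟨hne, fun h => h⟩
    rw [hz]; exact hφ

lemma sat_foldr (V : W → AP → Prop) (l : List (PLTL AP)) (v : ℕ → W) (k : ℕ) :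
    PLTL.Sat V (l.foldr PLTL.and PLTL.top) v k ↔ ∀ ψ ∈ l, PLTL.Sat V ψ v k := by
  induction l with
  | nil => simp [sat_top]
  | cons a l ih => simp [List.foldr_cons, sat_and, ih]

lemma sat_finsetAndP (V : W → AP → Prop) (Γ : Finset Ag) (f : Ag → PLTL AP)
    (v : ℕ → W) (k : ℕ) :
    PLTL.Sat V (finsetAndP Γ f) v k ↔ ∀ i ∈ Γ, PLTL.Sat V (f i) v k := by
  simp [finsetAndP, sat_foldr]

lemma ext_infPlay (M : CGM W Ag AP Act) {v : ℕ → W} {k : ℕ} {w : ℕ → W}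
    (hv : M.InfPlay v) (hw : M.Ext v k w) : M.InfPlay w :=
  ⟨by rw [hw.1 0 (Nat.zero_le k), hv.1], hw.2⟩

end Aux

/-- **Lemma E_σ.** In every extended CGM of form (2), the state formula
`φ₁ σ_Γ φ₂ ⇔ ⋁_{Θ₁,Θ₂⊆Θ_{I,Γ}} [ ⋀_{k=1,2}( ⋀_{θ∈Θ_k} ∃◯([θ]∧φ_k) ∧
⋀_{θ∈Θ_{I,Γ}∖Θ_k} ∀◯¬([θ]∧φ_k) ) ∧ ⋀_{θ₁∈Θ₁,θ₂∈Θ₂} [θ₁] σ_Γ [θ₂] ]`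
holds at every finite play. -/
theorem E_sigma {W Ag AP : Type} {Act : Ag → Type}
    [Fintype Ag] [Nonempty Ag] [∀ i, Nonempty (Act i)]
    (M : CGM W Ag AP Act) (pref : Ag → (ℕ → W) → (ℕ → W) → Prop)
    (Θ : Ag → Finset (PLTL AP)) (prec : Ag → PLTL AP → PLTL AP → Prop)
    (h2 : Form2 M pref Θ prec) (Γ : Finset Ag) (σ : Bool)
    (φ₁ φ₂ : PLTL AP) (v : ℕ → W) (k : ℕ) (hv : M.InfPlay v) :
    PrefGF M pref σ Γ φ₁ φ₂ v k ↔
      ∃ Θ₁ Θ₂ : Set (PLTL AP), Θ₁ ⊆ ThetaG Θ Γ ∧ Θ₂ ⊆ ThetaG Θ Γ ∧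
        -- ⋀_{θ∈Θ₁} ∃◯([θ] ∧ φ₁) ∧ ⋀_{θ∈Θ_{I,Γ}∖Θ₁} ∀◯¬([θ] ∧ φ₁)
        (∀ θ ∈ Θ₁, ∃ w : ℕ → W, M.Ext v k w ∧
          PLTL.Sat M.V (θ.bracket.and φ₁) w (k + 1)) ∧
        (∀ θ ∈ ThetaG Θ Γ \ Θ₁, ∀ w : ℕ → W, M.Ext v k w →
          ¬ PLTL.Sat M.V (θ.bracket.and φ₁) w (k + 1)) ∧
        -- ⋀_{θ∈Θ₂} ∃◯([θ] ∧ φ₂) ∧ ⋀_{θ∈Θ_{I,Γ}∖Θ₂} ∀◯¬([θ] ∧ φ₂)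
        (∀ θ ∈ Θ₂, ∃ w : ℕ → W, M.Ext v k w ∧
          PLTL.Sat M.V (θ.bracket.and φ₂) w (k + 1)) ∧
        (∀ θ ∈ ThetaG Θ Γ \ Θ₂, ∀ w : ℕ → W, M.Ext v k w →
          ¬ PLTL.Sat M.V (θ.bracket.and φ₂) w (k + 1)) ∧
        -- ⋀_{θ₁∈Θ₁, θ₂∈Θ₂} [θ₁] σ_Γ [θ₂]
        (∀ θ₁ ∈ Θ₁, ∀ θ₂ ∈ Θ₂,
          PrefGF M pref σ Γ θ₁.bracket θ₂.bracket v k) := by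
  classical
  constructor
  · intro h
    refine ⟨{θ ∈ ThetaG Θ Γ | ∃ w : ℕ → W, M.Ext v k w ∧
              PLTL.Sat M.V (θ.bracket.and φ₁) w (k + 1)},
            {θ ∈ ThetaG Θ Γ | ∃ w : ℕ → W, M.Ext v k w ∧
              PLTL.Sat M.V (θ.bracket.and φ₂) w (k + 1)},
            fun θ hθ => hθ.1, fun θ hθ => hθ.1,
            fun θ hθ => hθ.2, ?_, fun θ hθ => hθ.2, ?_, ?_⟩
    · rintro θ ⟨hθG, hnot⟩ w hw hsat
      exact hnot ⟨hθG, w, hw, hsat⟩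
    · rintro θ ⟨hθG, hnot⟩ w hw hsat
      exact hnot ⟨hθG, w, hw, hsat⟩
    · rintro θ₁ ⟨hθ₁G, w₁', hw₁', hs₁'⟩ θ₂ ⟨hθ₂G, w₂', hw₂', hs₂'⟩
      intro i hi w₁ w₂ hw₁ hw₂ hb₁ hb₂
      obtain ⟨f, hf, rfl⟩ := hθ₁G
      obtain ⟨g, hg, rfl⟩ := hθ₂G
      rw [sat_and] at hs₁' hs₂'
      rw [sat_bracket] at hb₁ hb₂
      obtain ⟨hs₁b, hs₁φ⟩ := hs₁'
      obtain ⟨hs₂b, hs₂φ⟩ := hs₂'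
      rw [sat_bracket] at hs₁b hs₂b
      have inf₁ := ext_infPlay M hv hw₁
      have inf₂ := ext_infPlay M hv hw₂
      have inf₁' := ext_infPlay M hv hw₁'
      have inf₂' := ext_infPlay M hv hw₂'
      have hfw₁ : PLTL.Sat M.V (f i) w₁ 0 :=
        (sat_finsetAndP M.V Γ f w₁ 0).mp hb₁ i hi
      have hfw₁' : PLTL.Sat M.V (f i) w₁' 0 :=
        (sat_finsetAndP M.V Γ f w₁' 0).mp hs₁b i hi
      have hgw₂ : PLTL.Sat M.V (g i) w₂ 0 :=
        (sat_finsetAndP M.V Γ g w₂ 0).mp hb₂ i hi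
      have hgw₂' : PLTL.Sat M.V (g i) w₂' 0 :=
        (sat_finsetAndP M.V Γ g w₂' 0).mp hs₂b i hi
      have key := h i hi w₁' w₂' hw₁' hw₂' hs₁φ hs₂φ
      have hiff : pref i w₁ w₂ ↔ pref i w₁' w₂' := by
        rw [h2.2.2.2 i (f i) (hf i hi) (g i) (hg i hi) w₁ w₂ inf₁ inf₂ hfw₁ hgw₂,
            h2.2.2.2 i (f i) (hf i hi) (g i) (hg i hi) w₁' w₂' inf₁' inf₂' hfw₁' hgw₂']
      cases σ with
      | false => simp only [SigRel, if_false] at key ⊢; exact fun hp => key (hiff.mp hp)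
      | true => simp only [SigRel, if_true] at key ⊢; exact hiff.mpr key
  · rintro ⟨Θ₁, Θ₂, hΘ₁, hΘ₂, hE1, hA1, hE2, hA2, hP⟩ i hi w₁ w₂ hw₁ hw₂ h1 h2'
    have inf₁ := ext_infPlay M hv hw₁
    have inf₂ := ext_infPlay M hv hw₂
    choose f hf hfs using fun j => h2.2.1 j w₁ inf₁
    choose g hg hgs using fun j => h2.2.1 j w₂ inf₂
    have hθ₁G : finsetAndP Γ f ∈ ThetaG Θ Γ := ⟨f, fun j _ => hf j, rfl⟩
    have hθ₂G : finsetAndP Γ g ∈ ThetaG Θ Γ := ⟨g, fun j _ => hg j, rfl⟩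
    have hb₁ : PLTL.Sat M.V (PLTL.bracket (finsetAndP Γ f)) w₁ (k + 1) :=
      (sat_bracket _ _ _ _).mpr ((sat_finsetAndP M.V Γ f w₁ 0).mpr fun j _ => hfs j)
    have hb₂ : PLTL.Sat M.V (PLTL.bracket (finsetAndP Γ g)) w₂ (k + 1) :=
      (sat_bracket _ _ _ _).mpr ((sat_finsetAndP M.V Γ g w₂ 0).mpr fun j _ => hgs j)
    have hm₁ : finsetAndP Γ f ∈ Θ₁ := by
      by_contra hc
      exact hA1 _ ⟨hθ₁G, hc⟩ w₁ hw₁ ((sat_and _ _ _ _ _).mpr ⟨hb₁, h1⟩)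
    have hm₂ : finsetAndP Γ g ∈ Θ₂ := by
      by_contra hc
      exact hA2 _ ⟨hθ₂G, hc⟩ w₂ hw₂ ((sat_and _ _ _ _ _).mpr ⟨hb₂, h2'⟩)
    exact hP _ hm₁ _ hm₂ i hi w₁ w₂ hw₁ hw₂ hb₁ hb₂
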